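/- Explicit quantum homotopy for the free toy scalar: on the ℂ[ħ]-module V = ℂ[ħ][x] ⊕ ξ·ℂ[ħ][x] (ξ odd of degree -1) define Q_ħ(f + ξg) = (x g - ħ g'), i.e. Q_ħ(ξg) = (x - ħ d/dx)g and Q_ħ(f) = 0 on the ξ-free part — concretely Q_ħ = x ∂_ξ - ħ ∂_x∂_ξ. Define p(x^n) = ħ^m (2m-1)!! if n = 2m is even, p(x^n) = 0 if n is odd, p(ξg) = 0; i : ℂ[ħ] → V the inclusion of constants; and K(x^n) = Σ_{j=0}^{⌊(n-1)/2⌋} ħ^j · ((n-1)!!/(n-1-2j)!!) · ξ x^{n-1-2j} for n ≥ 1, K(1) = 0, K(ξg) = 0. Then Q_ħ K + K Q_ħ = id - i∘p, p∘i = id, and K² = 0, K∘i = 0, p∘K = 0. -/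

import Mathlib

noncomputable section

/-- The coefficient ring `ℂ[ħ]`. -/
abbrev HbarRing := Polynomial ℂ

/-- The formal parameter `ħ`. -/
abbrev hbar : HbarRing := Polynomial.X

/-- The module `V = ℂ[ħ][x] ⊕ ξ·ℂ[ħ][x]`: first component the `ξ`-free part, second
component the coefficient of the odd variable `ξ`. -/
abbrev ToyV := Polynomial HbarRing × Polynomial HbarRing

/-- The BV differential `Q_ħ = x ∂_ξ - ħ ∂_x ∂_ξ`, i.e. `Q_ħ(f + ξg) = (x - ħ d/dx)g`. -/
def toyQ (v : ToyV) : ToyV :=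
  ((Polynomial.X : Polynomial HbarRing) * v.2
      - Polynomial.C hbar * Polynomial.derivative v.2, 0)

/-- The projection `p`: `p(x^{2m}) = ħ^m (2m-1)!!`, `p(x^{odd}) = 0`, `p(ξg) = 0`. -/
def toyProj (v : ToyV) : HbarRing :=
  ∑ m ∈ Finset.range (v.1.natDegree + 1),
    v.1.coeff (2 * m) * hbar ^ m * (Nat.doubleFactorial (2 * m - 1) : HbarRing)

/-- The inclusion of constants. -/
def toyIncl (c : HbarRing) : ToyV := (Polynomial.C c, 0)

/-- The chain homotopy
`K(x^n) = Σ_{j=0}^{⌊(n-1)/2⌋} ħ^j ((n-1)!!/(n-1-2j)!!) ξ x^{n-1-2j}` for `n ≥ 1`,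
`K(1) = 0`, `K(ξg) = 0`; the double-factorial ratio is the product
`(n-1)(n-3)⋯(n+1-2j)`. -/
def toyHtpy (v : ToyV) : ToyV :=
  (0, ∑ n ∈ Finset.Icc 1 v.1.natDegree, ∑ j ∈ Finset.range ((n - 1) / 2 + 1),
    Polynomial.C (v.1.coeff n * hbar ^ j *
        ((∏ l ∈ Finset.range j, (n - 1 - 2 * l) : ℕ) : HbarRing)) *
      (Polynomial.X : Polynomial HbarRing) ^ (n - 1 - 2 * j))

end

/-!
The projection `p` is the expectation for the centred Gaussian of variance `ħ`, whose moments
obey `m (n + 2) = (n + 1) ħ m n` (integration by parts). The values `k n = K(x^n)` obey the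
matching recursion `k (n + 2) = x^(n + 1) + (n + 1) ħ k n`, and the two recursions together give
`(x - ħ d/dx) k n = x^n - m n` and `K((x - ħ d/dx) x^n) = x^n`; both identities extend to all
polynomials by linearity. The side conditions are immediate: `K` lands in the `ξ`-part, which
`K` and `p` kill, and `K 1 = 0`.
-/

open Polynomial Finset
open scoped Nat

theorem Finset.sum_range_two_mul {M : Type*} [AddCommMonoid M] (f : ℕ → M) (m : ℕ) :
    ∑ n ∈ range (2 * m), f n = ∑ k ∈ range m, (f (2 * k) + f (2 * k + 1)) := by
  induction m with
  | zero => simp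
  | succ m ih =>
    rw [mul_add, mul_one, sum_range_succ, sum_range_succ, sum_range_succ, ih, add_assoc]

noncomputable section

namespace GaussianHomotopy

variable {R : Type*} [CommRing R] (h : R)

def raising : R[X] →ₗ[R] R[X] :=
  LinearMap.mulLeft R X - LinearMap.mulLeft R (C h) ∘ₗ derivative

theorem raising_apply (g : R[X]) : raising h g = X * g - C h * derivative g := rfl

/-- Moments of the centred Gaussian of variance `h`. -/
def moment : ℕ → R
  | 0 => 1
  | 1 => 0
  | n + 2 => h * (n + 1) * moment n

theorem moment_two_mul (m : ℕ) : moment h (2 * m) = h ^ m * ((2 * m - 1)‼ : R) := by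
  induction m with
  | zero => simp [moment]
  | succ m ih =>
    rw [show 2 * (m + 1) = 2 * m + 2 by ring, moment, ih, show 2 * m + 2 - 1 = 2 * m + 1 by omega,
      Nat.doubleFactorial_add_one]
    push_cast
    ring

theorem moment_two_mul_add_one (m : ℕ) : moment h (2 * m + 1) = 0 := by
  induction m with
  | zero => rfl
  | succ m ih => rw [show 2 * (m + 1) + 1 = 2 * m + 1 + 2 by ring, moment, ih, mul_zero]

def expectation : R[X] →ₗ[R] R :=
  lsum fun n => LinearMap.toSpanSingleton R R (moment h n)

theorem expectation_C (c : R) : expectation h (C c) = c := by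
  simp [expectation, sum_C_index, moment]

theorem expectation_X_pow (n : ℕ) : expectation h (X ^ n) = moment h n := by
  simp [expectation, ← monomial_one_right_eq_X_pow, sum_monomial_index]

theorem expectation_eq_sum (f : R[X]) :
    expectation h f = ∑ m ∈ range (f.natDegree + 1),
      f.coeff (2 * m) * h ^ m * ((2 * m - 1)‼ : R) := by
  rw [expectation, lsum_apply, sum_over_range' _ (by simp) (2 * (f.natDegree + 1)) (by omega),
    sum_range_two_mul]
  refine sum_congr rfl fun m _ => ?_
  simp [moment_two_mul, moment_two_mul_add_one, mul_assoc]

def homotopyMonomial : ℕ → R[X]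
  | 0 => 0
  | 1 => 1
  | n + 2 => X ^ (n + 1) + C (h * (n + 1)) * homotopyMonomial n

theorem raising_homotopyMonomial :
    ∀ n, raising h (homotopyMonomial h n) = X ^ n - C (moment h n)
  | 0 => by simp [raising_apply, homotopyMonomial, moment]
  | 1 => by simp [raising_apply, homotopyMonomial, moment]
  | n + 2 => by
    have ih := raising_homotopyMonomial n
    rw [raising_apply] at ih ⊢
    rw [homotopyMonomial, moment, derivative_add, derivative_C_mul, derivative_X_pow]
    simp only [map_mul, map_add, map_natCast, map_one, Nat.cast_add, Nat.cast_one,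
      Nat.add_sub_cancel]
    linear_combination C h * ((n : R[X]) + 1) * ih

theorem homotopyMonomial_succ_eq_sum : ∀ n, homotopyMonomial h (n + 1) =
    ∑ j ∈ range (n / 2 + 1),
      C (h ^ j * ((∏ l ∈ range j, (n - 2 * l) : ℕ) : R)) * X ^ (n - 2 * j)
  | 0 => by simp [homotopyMonomial]
  | 1 => by simp [homotopyMonomial]
  | n + 2 => by
    rw [homotopyMonomial, homotopyMonomial_succ_eq_sum n, mul_sum,
      show (n + 2) / 2 + 1 = n / 2 + 1 + 1 by omega, sum_range_succ' _ (n / 2 + 1),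
      add_comm]
    congr 1
    · refine sum_congr rfl fun j _ => ?_
      rw [prod_range_succ']
      simp only [show ∀ l, n + 2 - 2 * (l + 1) = n - 2 * l by omega]
      push_cast
      simp only [map_mul, map_pow, map_add, map_natCast, map_ofNat, map_one]
      ring
    · simp

def homotopy : R[X] →ₗ[R] R[X] :=
  lsum fun n => LinearMap.toSpanSingleton R R[X] (homotopyMonomial h n)

theorem homotopy_C (c : R) : homotopy h (C c) = 0 := by
  simp [homotopy, sum_C_index, homotopyMonomial]

theorem homotopy_X_pow (n : ℕ) : homotopy h (X ^ n) = homotopyMonomial h n := by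
  simp [homotopy, ← monomial_one_right_eq_X_pow, sum_monomial_index]

theorem homotopy_eq_sum (f : R[X]) :
    homotopy h f = ∑ n ∈ Icc 1 f.natDegree, ∑ j ∈ range ((n - 1) / 2 + 1),
      C (f.coeff n * h ^ j * ((∏ l ∈ range j, (n - 1 - 2 * l) : ℕ) : R)) *
        X ^ (n - 1 - 2 * j) := by
  rw [homotopy, lsum_apply, sum_over_range _ (by simp), range_eq_Ico,
    sum_eq_sum_Ico_succ_bot (by omega), Ico_add_one_right_eq_Icc]
  simp only [LinearMap.toSpanSingleton_apply, homotopyMonomial, smul_zero, zero_add]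
  refine sum_congr rfl fun n hn => ?_
  obtain ⟨k, rfl⟩ : ∃ k, n = k + 1 := ⟨n - 1, by simp at hn; omega⟩
  simp only [Nat.add_sub_cancel, homotopyMonomial_succ_eq_sum, smul_sum, smul_eq_C_mul, map_mul]
  exact sum_congr rfl fun j _ => by ring

theorem raising_homotopy (f : R[X]) : raising h (homotopy h f) = f - C (expectation h f) := by
  induction f using Polynomial.induction_on' with
  | add p q hp hq => simp only [map_add, hp, hq]; ring
  | monomial n a =>
    rw [← C_mul_X_pow_eq_monomial, ← smul_eq_C_mul, map_smul, map_smul, map_smul,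
      homotopy_X_pow, raising_homotopyMonomial, expectation_X_pow, smul_sub, smul_eq_C_mul,
      smul_eq_C_mul, smul_eq_mul, map_mul]

theorem homotopy_raising_X_pow : ∀ n, homotopy h (raising h (X ^ n)) = X ^ n
  | 0 => by
    rw [raising_apply, pow_zero, derivative_one, mul_zero, sub_zero, mul_one, ← pow_one X,
      homotopy_X_pow, homotopyMonomial]
  | n + 1 => by
    rw [raising_apply, derivative_X_pow, Nat.add_sub_cancel, ← pow_succ', ← mul_assoc,
      ← map_mul, ← smul_eq_C_mul, map_sub, map_smul, homotopy_X_pow, homotopy_X_pow,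
      homotopyMonomial, smul_eq_C_mul, Nat.cast_add, Nat.cast_one, add_sub_cancel_right]

theorem homotopy_raising (g : R[X]) : homotopy h (raising h g) = g := by
  induction g using Polynomial.induction_on' with
  | add p q hp hq => simp only [map_add, hp, hq]
  | monomial n a =>
    rw [← C_mul_X_pow_eq_monomial, ← smul_eq_C_mul, map_smul, map_smul, homotopy_raising_X_pow]

end GaussianHomotopy

end

open GaussianHomotopy

theorem toyQ_eq_raising (v : ToyV) : toyQ v = (raising hbar v.2, 0) := rfl

theorem toyProj_eq_expectation (v : ToyV) : toyProj v = expectation hbar v.1 :=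
  (expectation_eq_sum hbar v.1).symm

theorem toyHtpy_eq_homotopy (v : ToyV) : toyHtpy v = (0, homotopy hbar v.1) :=
  Prod.ext rfl (homotopy_eq_sum hbar v.1).symm

/-- the explicit quantum homotopy data for the free toy scalar satisfies
`Q_ħ K + K Q_ħ = id - i∘p`, `p∘i = id`, and the side conditions
`K² = 0`, `K∘i = 0`, `p∘K = 0`. -/
theorem toy_free_scalar_quantum_homotopy :
    (∀ v : ToyV, toyQ (toyHtpy v) + toyHtpy (toyQ v) = v - toyIncl (toyProj v)) ∧
    (∀ c : HbarRing, toyProj (toyIncl c) = c) ∧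
    (∀ v : ToyV, toyHtpy (toyHtpy v) = 0) ∧
    (∀ c : HbarRing, toyHtpy (toyIncl c) = 0) ∧
    (∀ v : ToyV, toyProj (toyHtpy v) = 0) := by
  refine ⟨fun v => ?_, fun c => ?_, fun v => ?_, fun c => ?_, fun v => ?_⟩
  · rw [toyHtpy_eq_homotopy, toyQ_eq_raising, toyQ_eq_raising, toyHtpy_eq_homotopy,
      toyProj_eq_expectation]
    ext1
    · simp [raising_homotopy, toyIncl]
    · simp [homotopy_raising, toyIncl]
  · rw [toyProj_eq_expectation, toyIncl, expectation_C]
  · simp [toyHtpy_eq_homotopy]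
  · simp [toyHtpy_eq_homotopy, toyIncl, homotopy_C]
  · simp [toyHtpy_eq_homotopy, toyProj_eq_expectation]
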